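/- Let a, b ∈ [0,1] with |a − b| ≤ 1 − δ for some δ ∈ (0, 1/2). Then |ω(a) − ω(b)| ≥ (1 + 2δ)·|a − b|², where ω(t) = 3t² − 2t³. -/
import Mathlib

/-- ω(t) = 3t² − 2t³. -/
noncomputable def omegaMM (t : ℝ) : ℝ := 3 * t^2 - 2 * t^3

lemma key (a b δ : ℝ) (hb0 : 0 ≤ b) (hba : b ≤ a) (ha1 : a ≤ 1)
    (hδ : 0 < δ) (hab : a - b ≤ 1 - δ) :
    omegaMM a - omegaMM b ≥ (1 + 2 * δ) * (a - b)^2 := by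
  unfold omegaMM
  nlinarith [sq_nonneg (a-b), mul_nonneg (mul_nonneg hb0 (sub_nonneg.2 ha1)) (sub_nonneg.2 hba),
    mul_nonneg (sub_nonneg.2 hab) (sq_nonneg (a-b))]

theorem stmt_15 (a b δ : ℝ) (ha : a ∈ Set.Icc (0:ℝ) 1) (hb : b ∈ Set.Icc (0:ℝ) 1)
    (hδ : δ ∈ Set.Ioo (0:ℝ) (1/2)) (hab : |a - b| ≤ 1 - δ) :
    |omegaMM a - omegaMM b| ≥ (1 + 2 * δ) * |a - b|^2 := by
  rcases le_total b a with h | h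
  · rw [abs_of_nonneg (sub_nonneg.2 h)] at hab ⊢
    have := key a b δ hb.1 h ha.2 hδ.1 hab
    calc |omegaMM a - omegaMM b| ≥ omegaMM a - omegaMM b := le_abs_self _
      _ ≥ _ := this
  · rw [abs_sub_comm] at hab; rw [abs_sub_comm (omegaMM a), abs_sub_comm a b]
    rw [abs_of_nonneg (sub_nonneg.2 h)] at hab ⊢
    have := key b a δ ha.1 h hb.2 hδ.1 hab
    calc |omegaMM b - omegaMM a| ≥ omegaMM b - omegaMM a := le_abs_self _
      _ ≥ _ := this
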